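/- For every sufficiently large n, there exists a boolean function g : {0,1}^n → {0,1} such that g(0^n) = 0, the fractional block sensitivity of g at the all-zeros input satisfies bs*_{0^n}(g) ≤ 200, more generally bs*_0(g) ≤ 200, and the zero-certificate complexity satisfies C_0(g) ≥ n/100. -/

import Mathlib

open Filter

namespace BS

variable {I : Type*} [Fintype I] [DecidableEq I]

/-- Flip the bits of `x` indexed by `B`. -/
def flipSet (x : I → Bool) (B : Finset I) : I → Bool :=
  fun i => if i ∈ B then !(x i) else x i

/-- `B` is a block of `f` at `x`. -/
def IsBlock (f : (I → Bool) → Bool) (x : I → Bool) (B : Finset I) : Prop :=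
  f (flipSet x B) ≠ f x

/-- Block sensitivity of `f` at `x`: the maximum number of pairwise disjoint blocks. -/
noncomputable def bsAt (f : (I → Bool) → Bool) (x : I → Bool) : ℕ :=
  sSup {k | ∃ B : Fin k → Finset I, (∀ t, IsBlock f x (B t)) ∧
    ∀ t t', t ≠ t' → Disjoint (B t) (B t')}

/-- Block sensitivity of `f`. -/
noncomputable def bs (f : (I → Bool) → Bool) : ℕ :=
  sSup {k | ∃ x, k = bsAt f x}

/-- `b`-block sensitivity of `f`. -/
noncomputable def bsb (f : (I → Bool) → Bool) (b : Bool) : ℕ :=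
  sSup {k | ∃ x, f x = b ∧ k = bsAt f x}

/-- `M`-fold block sensitivity of `f` at `x`. -/
noncomputable def bsMAt (f : (I → Bool) → Bool) (M : ℕ) (x : I → Bool) : ℕ :=
  sSup {k | ∃ B : Fin k → Finset I, (∀ t, IsBlock f x (B t)) ∧
    ∀ i : I, (Finset.univ.filter (fun t => i ∈ B t)).card ≤ M}

/-- `M`-fold `b`-block sensitivity of `f`. -/
noncomputable def bsMb (f : (I → Bool) → Bool) (M : ℕ) (b : Bool) : ℕ :=
  sSup {k | ∃ x, f x = b ∧ k = bsMAt f M x}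

/-- Fractional block sensitivity of `f` at `x`. -/
noncomputable def fbsAt (f : (I → Bool) → Bool) (x : I → Bool) : ℝ :=
  sSup {s | ∃ lam : Finset I → ℝ, (∀ B, 0 ≤ lam B) ∧
    (∀ B, ¬ IsBlock f x B → lam B = 0) ∧
    (∀ i : I, ∑ B ∈ Finset.univ.filter (fun B : Finset I => i ∈ B), lam B ≤ 1) ∧
    s = ∑ B : Finset I, lam B}

/-- Fractional block sensitivity of `f`. -/
noncomputable def fbs (f : (I → Bool) → Bool) : ℝ :=
  sSup {s | ∃ x, s = fbsAt f x}

/-- Fractional `b`-block sensitivity of `f`. -/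
noncomputable def fbsb (f : (I → Bool) → Bool) (b : Bool) : ℝ :=
  sSup {s | ∃ x, f x = b ∧ s = fbsAt f x}

/-- Certificate complexity of `f` at `x`. -/
noncomputable def CAt (f : (I → Bool) → Bool) (x : I → Bool) : ℕ :=
  sInf {k | ∃ S : Finset I, (∀ B, IsBlock f x B → (S ∩ B).Nonempty) ∧ k = S.card}

/-- Certificate complexity of `f`. -/
noncomputable def Cm (f : (I → Bool) → Bool) : ℕ :=
  sSup {k | ∃ x, k = CAt f x}

/-- `b`-certificate complexity of `f`. -/
noncomputable def Cb (f : (I → Bool) → Bool) (b : Bool) : ℕ :=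
  sSup {k | ∃ x, f x = b ∧ k = CAt f x}

/-- Fractional certificate complexity of `f` at `x`. -/
noncomputable def fCAt (f : (I → Bool) → Bool) (x : I → Bool) : ℝ :=
  sInf {s | ∃ w : I → ℝ, (∀ i, 0 ≤ w i ∧ w i ≤ 1) ∧
    (∀ B, IsBlock f x B → 1 ≤ ∑ i ∈ B, w i) ∧ s = ∑ i, w i}

/-- Fractional certificate complexity of `f`. -/
noncomputable def fC (f : (I → Bool) → Bool) : ℝ :=
  sSup {s | ∃ x, s = fCAt f x}

/-- Composition `f ∘ g` of boolean functions. -/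
def comp {J : Type*} [Fintype J] [DecidableEq J]
    (f : (I → Bool) → Bool) (g : (J → Bool) → Bool) :
    ((I × J) → Bool) → Bool :=
  fun x => f (fun i => g (fun j => x (i, j)))

/-- `k`-fold iterated composition `f^(k)` of an `n`-variate boolean function; the
variables of `f^(k)` are indexed by strings in `Fin k → Fin n`.  `f^(0)` is the
univariate identity function. -/
def iter {n : ℕ} (f : (Fin n → Bool) → Bool) :
    (k : ℕ) → ((Fin k → Fin n) → Bool) → Bool
  | 0, x => x (fun i => i.elim0)
  | k + 1, x => f (fun i => iter f k (fun s => x (Fin.cons i s)))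

/-- Spectral radius of a real square matrix: the maximum of `|μ|` over the complex
eigenvalues `μ` of the matrix. -/
noncomputable def specRad {m : Type*} [Fintype m] [DecidableEq m]
    (A : Matrix m m ℝ) : ℝ :=
  sSup {r | ∃ μ : ℂ, μ ∈ spectrum ℂ (A.map Complex.ofReal) ∧ r = ‖μ‖}

end BS

/-! The function is the indicator of a code `𝒞 ⊆ {0,1}ⁿ` of minimum distance `Δ > n/99` that
avoids `0ⁿ` but meets every subcube `{v | v = 0 on S}` with `|S| = n/100`. Such a code is built
greedily: a volume count, `(n choose n/100) · |Hamming ball of radius n/99| < 2^(n - n/100)`,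
leaves room in each subcube at every step. Meeting all these subcubes means that no `n/100`
zeros of `0ⁿ` certify `g = 0`.

At a `0`-input `x` the blocks are exactly the difference sets to the codewords. If `c₀` is a
nearest codeword, at distance `d`, every other codeword is at distance `≥ max(d, Δ - d) ≥ Δ/2`
from `x`, so the weight `1/d` on the difference set to `c₀` plus `2/Δ` everywhere puts weight
`≥ 1` on every block; by LP duality `bs*_x(g) ≤ 1 + 2n/Δ < 200`. -/

namespace BS

open Finset

lemma choose_mul_pow_le (n m k : ℕ) : n.choose m * k ^ (n - m) ≤ (k + 1) ^ n := by
  rcases le_or_gt m n with hm | hm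
  · rw [add_comm, add_pow]
    refine le_trans (le_of_eq ?_) (single_le_sum (fun j _ => Nat.zero_le _)
      (mem_range.2 (Nat.lt_succ_of_le hm)))
    simp [mul_comm]
  · simp [Nat.choose_eq_zero_of_lt hm]

lemma choose_mul_add_one_lt_two_pow {N m r B : ℕ} (h : 14 * m + 12 * r + 2 < N)
    (hB : B * 64 ^ (N - r) ≤ 65 ^ N) : N.choose m * B + 1 < 2 ^ (N - m) := by
  set P := 64 ^ (N - m) * 64 ^ (N - r)
  have hP : P ≤ 65 ^ N * 65 ^ N := by
    have h64 : ∀ e ≤ N, 64 ^ e ≤ 65 ^ N := fun e he =>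
      (Nat.pow_le_pow_left (by norm_num) e).trans (Nat.pow_le_pow_right (by norm_num) he)
    exact Nat.mul_le_mul (h64 _ (Nat.sub_le _ _)) (h64 _ (Nat.sub_le _ _))
  have hupper : (N.choose m * B + 1) * P ≤ 2 * (65 ^ N * 65 ^ N) := by
    have hC : N.choose m * 64 ^ (N - m) ≤ 65 ^ N := choose_mul_pow_le N m 64
    calc (N.choose m * B + 1) * P = N.choose m * 64 ^ (N - m) * (B * 64 ^ (N - r)) + P := by ring
      _ ≤ 65 ^ N * 65 ^ N + 65 ^ N * 65 ^ N := Nat.add_le_add (Nat.mul_le_mul hC hB) hP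
      _ = _ := by ring
  -- `65 ^ 4 ≤ 2 ^ 25`, so after squaring it remains to compare `25 N + 2` with the doubled
  -- exponent `14 (N - m) + 12 (N - r)`: this is where the hypothesis `h` comes from.
  have hlower : 2 * (65 ^ N * 65 ^ N) < 2 ^ (N - m) * P := by
    have hE : 2 ^ (N - m) * P = 2 ^ (7 * (N - m) + 6 * (N - r)) := by
      simp only [P, show (64 : ℕ) = 2 ^ 6 by norm_num, ← pow_mul, ← pow_add]
      ring_nf
    rw [hE, ← Nat.pow_lt_pow_iff_left two_ne_zero]
    calc (2 * (65 ^ N * 65 ^ N)) ^ 2 = 4 * 65 ^ (4 * N) := by ring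
      _ = 4 * (65 ^ 4) ^ N := by rw [pow_mul]
      _ ≤ 4 * (2 ^ 25) ^ N := Nat.mul_le_mul_left _ (Nat.pow_le_pow_left (by norm_num) _)
      _ = 2 ^ (25 * N + 2) := by rw [pow_add, pow_mul]; ring
      _ < _ := by rw [← pow_mul]; exact Nat.pow_lt_pow_right (by norm_num) (by omega)
  exact Nat.lt_of_mul_lt_mul_right (hupper.trans_lt hlower)

lemma exists_separated_hitting {α ι : Type*} [DecidableEq α] (R : α → Finset α)
    (hR : ∀ a b, b ∈ R a → a ∈ R b) {V : ℕ} (hV : ∀ a, #(R a) ≤ V) (A : ι → Finset α)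
    (𝒮 : Finset ι) (hA : ∀ S ∈ 𝒮, #𝒮 * V < #(A S)) :
    ∃ 𝒞 : Finset α, #𝒞 ≤ #𝒮 ∧ (∀ c ∈ 𝒞, ∃ S ∈ 𝒮, c ∈ A S) ∧
      (∀ c ∈ 𝒞, ∀ c' ∈ 𝒞, c' ∈ R c → c' = c) ∧ ∀ S ∈ 𝒮, ∃ c ∈ 𝒞, c ∈ A S := by
  classical
  induction 𝒮 using Finset.induction_on with
  | empty => exact ⟨∅, by simp⟩
  | @insert S 𝒮 hS ih =>
    have hcard : #(insert S 𝒮) = #𝒮 + 1 := card_insert_of_notMem hS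
    obtain ⟨𝒞, h𝒞, hin, hsep, hhit⟩ := ih fun T hT => lt_of_le_of_lt
      (Nat.mul_le_mul_right V (by omega)) (hA T (mem_insert_of_mem hT))
    have hbad : #(𝒞.biUnion R) < #(A S) := calc
      #(𝒞.biUnion R) ≤ #𝒞 * V := card_biUnion_le_card_mul _ _ _ fun c _ => hV c
      _ ≤ #(insert S 𝒮) * V := Nat.mul_le_mul_right V (by omega)
      _ < #(A S) := hA S (mem_insert_self S 𝒮)
    obtain ⟨v, hvA, hvfar⟩ := exists_mem_notMem_of_card_lt_card hbad
    simp only [mem_biUnion, not_exists, not_and] at hvfar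
    refine ⟨insert v 𝒞, (card_insert_le v 𝒞).trans (by omega), ?_, ?_, ?_⟩
    · simp only [mem_insert, forall_eq_or_imp, exists_eq_or_imp]
      exact ⟨Or.inl hvA, fun c hc => Or.inr (hin c hc)⟩
    · intro c hc c' hc' hcc'
      rcases mem_insert.1 hc with rfl | hc𝒞 <;> rcases mem_insert.1 hc' with rfl | hc'𝒞
      · rfl
      · exact absurd (hR _ _ hcc') (hvfar c' hc'𝒞)
      · exact absurd hcc' (hvfar c hc𝒞)
      · exact hsep c hc𝒞 c' hc'𝒞 hcc'
    · simp only [mem_insert, forall_eq_or_imp, exists_eq_or_imp]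
      exact ⟨Or.inl hvA, fun T hT => Or.inr (hhit T hT)⟩

variable {I : Type*} [DecidableEq I]

lemma flipSet_empty (x : I → Bool) : flipSet x ∅ = x := by
  funext i; simp [flipSet]

lemma IsBlock.nonempty {f : (I → Bool) → Bool} {x : I → Bool} {B : Finset I}
    (h : IsBlock f x B) : B.Nonempty :=
  nonempty_iff_ne_empty.2 (by rintro rfl; simp [IsBlock, flipSet_empty] at h)

variable [Fintype I]

lemma flipSet_filter_ne (x y : I → Bool) : flipSet x {i | x i ≠ y i} = y := by
  funext i; cases hx : x i <;> cases hy : y i <;> simp [flipSet, hx, hy]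

lemma filter_ne_flipSet (x : I → Bool) (B : Finset I) :
    ({i | x i ≠ flipSet x B i} : Finset I) = B := by
  ext i; by_cases h : i ∈ B <;> simp [flipSet, h]

lemma hammingDist_flipSet (x : I → Bool) (B : Finset I) :
    hammingDist x (flipSet x B) = #B := by
  rw [hammingDist, filter_ne_flipSet]

lemma isBlock_mem_iff {𝒞 : Finset (I → Bool)} {x : I → Bool} (hx : x ∉ 𝒞) (B : Finset I) :
    IsBlock (fun v => decide (v ∈ 𝒞)) x B ↔ flipSet x B ∈ 𝒞 := by
  simp [IsBlock, hx]

lemma fbsAt_le_sum {f : (I → Bool) → Bool} {x : I → Bool} (w : I → ℝ) (hw : ∀ i, 0 ≤ w i)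
    (hblock : ∀ B, IsBlock f x B → 1 ≤ ∑ i ∈ B, w i) : fbsAt f x ≤ ∑ i, w i := by
  refine Real.sSup_le ?_ (sum_nonneg fun i _ => hw i)
  rintro s ⟨lam, hlam, hzero, hcap, rfl⟩
  have hle : ∀ B, lam B ≤ ∑ i ∈ B, lam B * w i := fun B => by
    rw [← mul_sum]
    by_cases hB : IsBlock f x B
    · exact le_mul_of_one_le_right (hlam B) (hblock B hB)
    · simp [hzero B hB]
  calc ∑ B, lam B ≤ ∑ B, ∑ i ∈ B, lam B * w i := sum_le_sum fun B _ => hle B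
    _ = ∑ i, (∑ B with i ∈ B, lam B) * w i := by
      simp_rw [sum_mul]
      exact sum_comm' (by simp)
    _ ≤ ∑ i, w i := sum_le_sum fun i _ => mul_le_of_le_one_left (hw i) (hcap i)

lemma fbsb_le {f : (I → Bool) → Bool} {b : Bool} {M : ℝ} (hM : 0 ≤ M)
    (h : ∀ x, f x = b → fbsAt f x ≤ M) : fbsb f b ≤ M :=
  Real.sSup_le (by rintro s ⟨x, hx, rfl⟩; exact h x hx) hM

lemma CAt_le_card (f : (I → Bool) → Bool) (x : I → Bool) : CAt f x ≤ Fintype.card I :=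
  Nat.sInf_le ⟨univ, fun B hB => by simpa using hB.nonempty, rfl⟩

lemma CAt_le_Cb (f : (I → Bool) → Bool) (x : I → Bool) : CAt f x ≤ Cb f (f x) :=
  le_csSup ⟨Fintype.card I, by rintro k ⟨y, -, rfl⟩; exact CAt_le_card f y⟩ ⟨x, rfl, rfl⟩

lemma le_CAt {f : (I → Bool) → Bool} {x : I → Bool} {k : ℕ}
    (h : ∀ S : Finset I, #S < k → ∃ B, IsBlock f x B ∧ Disjoint S B) : k ≤ CAt f x := by
  refine le_csInf ⟨_, univ, fun B hB => by simpa using hB.nonempty, rfl⟩ ?_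
  rintro _ ⟨S, hS, rfl⟩
  by_contra! hlt
  obtain ⟨B, hB, hdisj⟩ := h S hlt
  exact not_nonempty_iff_eq_empty.2 (disjoint_iff_inter_eq_empty.1 hdisj) (hS B hB)

lemma fbsAt_decide_mem_le {𝒞 : Finset (I → Bool)} (h𝒞 : 𝒞.Nonempty) {Δ : ℕ} (hΔ : 0 < Δ)
    (hsep : ∀ c ∈ 𝒞, ∀ c' ∈ 𝒞, c ≠ c' → Δ ≤ hammingDist c c') {x : I → Bool} (hx : x ∉ 𝒞) :
    fbsAt (fun v => decide (v ∈ 𝒞)) x ≤ 1 + 2 * Fintype.card I / Δ := by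
  obtain ⟨c₀, hc₀, hmin⟩ := exists_min_image 𝒞 (hammingDist x) h𝒞
  have hd : 0 < hammingDist x c₀ := hammingDist_pos.2 fun h => hx (h ▸ hc₀)
  set D : Finset I := {i | x i ≠ c₀ i}
  have hD : (#D : ℝ) = hammingDist x c₀ := rfl
  set w : I → ℝ := fun i => (if i ∈ D then (#D : ℝ)⁻¹ else 0) + 2 / Δ
  have hw : ∀ i, 0 ≤ w i := fun i => by positivity
  have hwB : ∀ B : Finset I, (∑ i ∈ B, if i ∈ D then (#D : ℝ)⁻¹ else 0) ≤ ∑ i ∈ B, w i ∧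
      ∑ i ∈ B, 2 / (Δ : ℝ) ≤ ∑ i ∈ B, w i := fun B =>
    ⟨sum_le_sum fun i _ => le_add_of_nonneg_right (by positivity),
      sum_le_sum fun i _ => le_add_of_nonneg_left (by positivity)⟩
  calc fbsAt (fun v => decide (v ∈ 𝒞)) x ≤ ∑ i, w i := by
        refine fbsAt_le_sum w hw fun B hB => ?_
        rw [isBlock_mem_iff hx] at hB
        by_cases hc : flipSet x B = c₀
        · have hBD : B = D := by rw [← filter_ne_flipSet x B, hc]
          refine le_trans (le_of_eq ?_) (hwB B).1
          rw [hBD, sum_ite_of_true fun i hi => hi, sum_const, nsmul_eq_mul,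
            mul_inv_cancel₀ (by rw [hD]; positivity)]
        · have hsize : Δ ≤ 2 * #B := by
            have hfar := hsep _ hB _ hc₀ hc
            have htri := hammingDist_triangle (flipSet x B) x c₀
            have hnear := hmin _ hB
            rw [hammingDist_comm (flipSet x B) x, hammingDist_flipSet] at htri
            rw [hammingDist_flipSet] at hnear
            omega
          refine le_trans ?_ (hwB B).2
          rw [sum_const, nsmul_eq_mul, mul_div_assoc', le_div_iff₀ (by positivity), one_mul]
          exact_mod_cast (by omega : Δ ≤ #B * 2)
    _ = 1 + 2 * Fintype.card I / Δ := by
        rw [sum_add_distrib, sum_ite_mem, univ_inter, sum_const, nsmul_eq_mul,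
          mul_inv_cancel₀ (by rw [hD]; positivity), sum_const, card_univ, nsmul_eq_mul]
        ring

lemma card_subcube (S : Finset I) :
    #{v : I → Bool | ∀ i ∈ S, v i = false} = 2 ^ (Fintype.card I - #S) := by
  have : ({v : I → Bool | ∀ i ∈ S, v i = false} : Finset _) =
      Fintype.piFinset fun i => if i ∈ S then {false} else univ := by
    ext v; simp only [mem_filter, mem_univ, true_and, Fintype.mem_piFinset]
    refine forall_congr' fun i => ?_
    split_ifs with h <;> simp [h]
  rw [this, Fintype.card_piFinset]
  simp [apply_ite card, prod_ite, filter_not, card_sdiff]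

lemma card_hammingBall_mul_pow_le (c : I → Bool) (r : ℕ) {k : ℕ} (hk : 0 < k) :
    #{v | hammingDist v c ≤ r} * k ^ (Fintype.card I - r) ≤ (k + 1) ^ Fintype.card I := by
  set weight : (I → Bool) → ℕ := fun v => ∏ i, if v i = c i then k else 1
  have htotal : ∑ v, weight v = (k + 1) ^ Fintype.card I := by
    rw [← Fintype.prod_sum (fun i (b : Bool) => if b = c i then k else 1), ← card_univ,
      ← prod_const]
    refine prod_congr rfl fun i _ => ?_
    cases c i <;> simp [add_comm]
  have hweight : ∀ v, hammingDist v c ≤ r → k ^ (Fintype.card I - r) ≤ weight v := by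
    intro v hv
    have hagree : #{i | v i = c i} + hammingDist v c = Fintype.card I := by
      rw [← card_univ]; exact card_filter_add_card_filter_not _
    simp only [weight, prod_ite, prod_const, one_pow, mul_one]
    exact Nat.pow_le_pow_right hk (by omega)
  calc #{v | hammingDist v c ≤ r} * k ^ (Fintype.card I - r)
      = ∑ v with hammingDist v c ≤ r, k ^ (Fintype.card I - r) := by rw [sum_const, smul_eq_mul]
    _ ≤ ∑ v with hammingDist v c ≤ r, weight v :=
        sum_le_sum fun v hv => hweight v (by simpa using hv)
    _ ≤ ∑ v, weight v := sum_le_sum_of_subset (subset_univ _)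
    _ = _ := htotal

lemma exists_separated_code_hitting_subcubes {m r : ℕ}
    (h : 14 * m + 12 * r + 2 < Fintype.card I) :
    ∃ 𝒞 : Finset (I → Bool), (fun _ => false) ∉ 𝒞 ∧
      (∀ c ∈ 𝒞, ∀ c' ∈ 𝒞, c ≠ c' → r < hammingDist c c') ∧
      ∀ S : Finset I, #S ≤ m → ∃ c ∈ 𝒞, ∀ i ∈ S, c i = false := by
  set ball : (I → Bool) → Finset (I → Bool) := fun c => {v | hammingDist v c ≤ r}
  obtain ⟨c₀, -, hc₀⟩ := exists_mem_eq_sup univ univ_nonempty fun c => #(ball c)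
  set subcube : Finset I → Finset (I → Bool) := fun S => {v | ∀ i ∈ S, v i = false}
  have hA : ∀ S ∈ powersetCard m (univ : Finset I),
      #(powersetCard m (univ : Finset I)) * univ.sup (fun c => #(ball c)) <
        #((subcube S).erase fun _ => false) := by
    intro S hS
    rw [mem_powersetCard] at hS
    have := choose_mul_add_one_lt_two_pow h (card_hammingBall_mul_pow_le c₀ r (by norm_num))
    rw [card_erase_of_mem (by simp [subcube]), card_subcube, hS.2, card_powersetCard, card_univ,
      hc₀]
    simp only [ball]
    omega
  obtain ⟨𝒞, -, hin, hsep, hhit⟩ := exists_separated_hitting ball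
    (fun a b hab => by simpa [ball, hammingDist_comm] using hab)
    (fun c => le_sup (f := fun c => #(ball c)) (mem_univ c)) _ _ hA
  refine ⟨𝒞, fun h0 => ?_, fun c hc c' hc' hne => ?_, fun S hS => ?_⟩
  · obtain ⟨S, -, hS⟩ := hin _ h0
    simp at hS
  · by_contra! hclose
    exact hne (hsep c' hc' c hc (by simpa [ball] using hclose))
  · obtain ⟨S', hSS', hS'⟩ := exists_superset_card_eq hS (by omega)
    obtain ⟨c, hc, hcS'⟩ := hhit S' (mem_powersetCard.2 ⟨subset_univ _, hS'⟩)
    exact ⟨c, hc, fun i hi => (mem_filter.1 (mem_of_mem_erase hcS')).2 i (hSS' hi)⟩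

end BS

open BS in
/-- For every sufficiently large `n` there is a boolean function
`g` on `n` variables with `g(0ⁿ) = 0`, `bs*_{0ⁿ}(g) ≤ 200`, more generally
`bs*_0(g) ≤ 200`, and `C_0(g) ≥ n/100`. -/
theorem exists_good_inner_function :
    ∃ N : ℕ, ∀ n ≥ N, ∃ g : (Fin n → Bool) → Bool,
      g (fun _ => false) = false ∧
      fbsAt g (fun _ => false) ≤ 200 ∧
      fbsb g false ≤ 200 ∧
      (n : ℝ) / 100 ≤ (Cb g false : ℝ) := by
  refine ⟨100, fun n hn => ?_⟩
  obtain ⟨𝒞, h0, hsep, hhit⟩ :=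
    exists_separated_code_hitting_subcubes (I := Fin n) (m := n / 100) (r := n / 99)
      (by rw [Fintype.card_fin]; omega)
  set g : (Fin n → Bool) → Bool := fun v => decide (v ∈ 𝒞)
  have hg0 : g (fun _ => false) = false := by simpa [g] using h0
  have hfbs : ∀ x, g x = false → fbsAt g x ≤ 200 := by
    intro x hx
    obtain ⟨c, hc, -⟩ := hhit ∅ (by simp)
    refine (fbsAt_decide_mem_le ⟨c, hc⟩ (Nat.succ_pos (n / 99)) hsep
      (by simpa [g] using hx)).trans ?_
    have hΔ : (0 : ℝ) < ((n / 99 + 1 : ℕ) : ℝ) := by positivity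
    have h2n : (2 * n : ℝ) ≤ 199 * ((n / 99 + 1 : ℕ) : ℝ) := by
      exact_mod_cast (by omega : 2 * n ≤ 199 * (n / 99 + 1))
    rw [Fintype.card_fin]
    linarith [(div_le_iff₀ hΔ).2 h2n]
  have hC : n / 100 + 1 ≤ CAt g (fun _ => false) := le_CAt fun S hS => by
    obtain ⟨c, hc, hcS⟩ := hhit S (by omega)
    refine ⟨Finset.univ.filter fun i => false ≠ c i,
      (isBlock_mem_iff h0 _).2 (by rwa [flipSet_filter_ne]), ?_⟩
    exact Finset.disjoint_left.2 fun i hi => by simp [hcS i hi]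
  refine ⟨g, hg0, hfbs _ hg0, fbsb_le (by norm_num) hfbs, ?_⟩
  calc (n : ℝ) / 100 ≤ (n / 100 : ℕ) + 1 := by
        rw [← Nat.floor_div_eq_div (K := ℝ)]; exact (Nat.lt_floor_add_one _).le
    _ ≤ (CAt g (fun _ => false) : ℝ) := by exact_mod_cast hC
    _ ≤ (Cb g false : ℝ) := by exact_mod_cast hg0 ▸ CAt_le_Cb g _
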